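/- For any π ∈ NCL(n), the connection relation (i and j are connected if there is a chain of blocks B_1,...,B_s of π with i ∈ B_1, j ∈ B_s, and consecutive blocks intersecting) induces a partition c(π) of {1,...,n} which is a non-crossing partition. -/

import Mathlib

open scoped Classical


/-- Two blocks `B`, `C` cross: there are `i < k < p < q` with `i, p ∈ B` and `k, q ∈ C`. -/
def Crosses {n : ℕ} (B C : Finset (Fin n)) : Prop :=
  ∃ i k p q : Fin n, i < k ∧ k < p ∧ p < q ∧ i ∈ B ∧ p ∈ B ∧ k ∈ C ∧ q ∈ C

/-- `π` is a non-crossing linked partition of `{1, …, n}` (encoded as `Fin n`):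
its (nonempty) blocks cover `Fin n`, are pairwise non-crossing, any two distinct blocks
intersect in at most one element, and if two distinct blocks intersect in `{j}` then both
blocks have at least two elements and `j` is the minimal element of exactly one of them. -/
def IsNCL (n : ℕ) (π : Finset (Finset (Fin n))) : Prop :=
  (∀ B ∈ π, B.Nonempty) ∧
  (∀ x : Fin n, ∃ B ∈ π, x ∈ B) ∧
  (∀ B ∈ π, ∀ C ∈ π, B ≠ C → ¬ Crosses B C) ∧
  (∀ B ∈ π, ∀ C ∈ π, B ≠ C → (B ∩ C).card ≤ 1 ∧
    ∀ j : Fin n, B ∩ C = {j} →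
      2 ≤ B.card ∧ 2 ≤ C.card ∧
        Xor' (B.min = (j : WithBot (Fin n))) (C.min = (j : WithBot (Fin n))))

/-- `π` is a non-crossing partition: a non-crossing linked partition with pairwise
disjoint blocks. -/
def IsNC (n : ℕ) (π : Finset (Finset (Fin n))) : Prop :=
  IsNCL n π ∧ ∀ B ∈ π, ∀ C ∈ π, B ≠ C → Disjoint B C

/-- `Refines n σ π` (i.e. `σ ⪯ π`): every block of `π` is a union of blocks of `σ`. -/
def Refines (n : ℕ) (σ π : Finset (Finset (Fin n))) : Prop :=
  ∀ B ∈ π, ∃ S : Finset (Finset (Fin n)), S ⊆ σ ∧ B = S.sup id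

/-- `a` and `b` lie in a common block of `π`. -/
def Linked {n : ℕ} (π : Finset (Finset (Fin n))) (a b : Fin n) : Prop :=
  ∃ B ∈ π, a ∈ B ∧ b ∈ B

/-- `a` and `b` are connected in `π`: joined by a chain of pairwise intersecting blocks. -/
def Connected {n : ℕ} (π : Finset (Finset (Fin n))) (a b : Fin n) : Prop :=
  Relation.ReflTransGen (Linked π) a b

/-- The partition `c(π)` of `Fin n` into the connected components of `π`. -/
noncomputable def cPart (n : ℕ) (π : Finset (Finset (Fin n))) : Finset (Finset (Fin n)) :=
  Finset.univ.image fun i => Finset.univ.filter (Connected π i)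

/-- Embedding of the unbarred copy: `i ↦ 2 i` in the interleaved order
`1, 1̄, 2, 2̄, …, n, n̄`. -/
def ueEmb (n : ℕ) (i : Fin n) : Fin (2 * n) := ⟨2 * i.1, by have := i.isLt; omega⟩

/-- Embedding of the barred copy: `i ↦ 2 i + 1` in the interleaved order. -/
def beEmb (n : ℕ) (i : Fin n) : Fin (2 * n) := ⟨2 * i.1 + 1, by have := i.isLt; omega⟩

/-- The union `γ ∪ γ'` inside the interleaved ordered set `1, 1̄, 2, 2̄, …, n, n̄`. -/
def interleave (n : ℕ) (γ γ' : Finset (Finset (Fin n))) : Finset (Finset (Fin (2 * n))) :=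
  γ.image (Finset.image (ueEmb n)) ∪ γ'.image (Finset.image (beEmb n))

/-- `γ'` is the Kreweras complement of `γ`: the largest non-crossing partition (in the
refinement order) such that `γ ∪ γ'` is non-crossing in the interleaved order. -/
def IsKr (n : ℕ) (γ γ' : Finset (Finset (Fin n))) : Prop :=
  IsNC n γ' ∧ IsNC (2 * n) (interleave n γ γ') ∧
  ∀ τ, IsNC n τ → IsNC (2 * n) (interleave n γ τ) → Refines n τ γ'

/-- `B` is an exterior block of `γ`: no other block `D` of `γ` contains elements `l, s`
with `l = min B`, or `l < min B` and `max B < s`. -/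
def IsExteriorIn (n : ℕ) (γ : Finset (Finset (Fin n))) (B : Finset (Fin n)) : Prop :=
  B ∈ γ ∧ ∀ D ∈ γ, D ≠ B → ∀ l ∈ D, ∀ s ∈ D,
    ¬((l ∈ B ∧ ∀ b ∈ B, l ≤ b) ∨ (∀ b ∈ B, l < b ∧ b < s))

/-- Halving map `Fin (2n) → Fin n`. -/
def halfEmb (n : ℕ) (i : Fin (2 * n)) : Fin n := ⟨i.1 / 2, by have := i.isLt; omega⟩

/-- `γ₋`: the restriction of `γ ∈ NC(2n)` to the odd elements `{1, 3, …, 2n − 1}`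
(indices `≡ 0 mod 2` in the `0`-based encoding), identified with a partition of `Fin n`. -/
noncomputable def minusPart (n : ℕ) (γ : Finset (Finset (Fin (2 * n)))) :
    Finset (Finset (Fin n)) :=
  (γ.filter fun B => ∀ i ∈ B, i.1 % 2 = 0).image (Finset.image (halfEmb n))

/-- `γ₊`: the restriction of `γ ∈ NC(2n)` to the even elements `{2, 4, …, 2n}`,
identified with a partition of `Fin n`. -/
noncomputable def plusPart (n : ℕ) (γ : Finset (Finset (Fin (2 * n)))) :
    Finset (Finset (Fin n)) :=
  (γ.filter fun B => ∀ i ∈ B, i.1 % 2 = 1).image (Finset.image (halfEmb n))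

/-- `γ ∈ NC_s(2n)`: a non-crossing partition of `{1, …, 2n}` all of whose blocks have
elements of constant parity, with `γ₊ = Kr(γ₋)`. -/
def NCs (n : ℕ) (γ : Finset (Finset (Fin (2 * n)))) : Prop :=
  IsNC (2 * n) γ ∧
  (∀ B ∈ γ, (∀ i ∈ B, i.1 % 2 = 0) ∨ (∀ i ∈ B, i.1 % 2 = 1)) ∧
  IsKr n (minusPart n γ) (plusPart n γ)

/-- The restriction of `γ` to a subset `S`. -/
noncomputable def restrictTo (n : ℕ) (γ : Finset (Finset (Fin n))) (S : Finset (Fin n)) :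
    Finset (Finset (Fin n)) :=
  (γ.image fun B => B ∩ S).filter Finset.Nonempty

/-- A planar rooted tree: a root together with a linearly ordered (left to right) list of
subtrees. -/
inductive PTree where
  | node : List PTree → PTree

mutual
/-- Number of vertices of a planar rooted tree. -/
def PTree.size : PTree → ℕ
  | .node ts => 1 + sizeList ts
def sizeList : List PTree → ℕ
  | [] => 0
  | t :: ts => PTree.size t + sizeList ts
end

/-- Depth-first indices of the roots of a list of trees, the first root getting index `k`. -/
def childRoots : List PTree → ℕ → List ℕ
  | [], _ => []
  | t :: ts, k => k :: childRoots ts (k + PTree.size t)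

mutual
/-- The blocks of the constituent elementary trees (a root together with its offsprings,
provided there is at least one offspring) of a planar tree, with vertices numbered in
depth-first (left-first) order starting at `k`. -/
def PTree.blk : PTree → ℕ → List (List ℕ)
  | .node ts, k =>
      (if ts.isEmpty then [] else [k :: childRoots ts (k + 1)]) ++ blkList ts (k + 1)
def blkList : List PTree → ℕ → List (List ℕ)
  | [], _ => []
  | t :: ts, k => PTree.blk t k ++ blkList ts (k + PTree.size t)
end

/-- The blocks of the elementary trees constituting a planar tree, in depth-first
numbering starting at `0`; a single vertex is itself an elementary tree. -/
def treeBlocks : PTree → List (List ℕ)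
  | .node [] => [[0]]
  | t => t.blk 0

/-- Convert a list of (`0`-based) vertex numbers into a block of `Fin n`. -/
def listToBlock (n : ℕ) (l : List ℕ) : Finset (Fin n) :=
  (l.filterMap fun i => if h : i < n then some (⟨i, h⟩ : Fin n) else none).toFinset

mutual
/-- Evaluation of a planar rooted tree: the product over its vertices of `f k`, where `k`
is the number of offsprings of the vertex (so an elementary tree with `m` vertices
contributes `f (m − 1)`). -/
def PTree.eval (f : ℕ → ℂ) : PTree → ℂ
  | .node ts => f ts.length * evalList f ts
def evalList (f : ℕ → ℂ) : List PTree → ℂ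
  | [] => 1
  | t :: ts => PTree.eval f t * evalList f ts
end

/-- A bicolor planar rooted tree: each subtree carries a color (`true` = color 1,
`false` = color 0). -/
inductive BTree where
  | node : List (Bool × BTree) → BTree

mutual
/-- Number of vertices of a bicolor planar tree. -/
def BTree.size : BTree → ℕ
  | .node ts => 1 + bsizeList ts
def bsizeList : List (Bool × BTree) → ℕ
  | [] => 0
  | (_, t) :: ts => BTree.size t + bsizeList ts
end

mutual
/-- Validity of a bicolor planar tree: at every vertex, the offsprings of color 1 precede
the offsprings of color 0. -/
def BTree.Valid : BTree → Prop
  | .node ts => List.Chain' (fun a b => b ≤ a) (ts.map Prod.fst) ∧ bvalidList ts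
def bvalidList : List (Bool × BTree) → Prop
  | [] => True
  | (_, t) :: ts => BTree.Valid t ∧ bvalidList ts
end

/-- A bicolor tree is elementary when all offsprings of the root are leaves. -/
def BTree.IsElementary : BTree → Prop
  | .node ts => ∀ p ∈ ts, p.2 = BTree.node []
/-- The term `t_π[X_1, …, X_n]`: the product over blocks `B = (i_1 < … < i_l)` of `π` of
`t_{l−1}(X_{i_1}, …, X_{i_l})`, times the product over `k ∈ s(π)` (the elements that are
not the minimal element of any block) of `t_0(X_k)`. Here `t m` stands for `t_{m−1}`,
taking `m` arguments. -/
noncomputable def tTerm {A : Type*} [Ring A] (t : ∀ m : ℕ, (Fin m → A) → ℂ)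
    (n : ℕ) (π : Finset (Finset (Fin n))) (X : Fin n → A) : ℂ :=
  (∏ B ∈ π, t B.card fun j => X (B.orderIsoOfFin rfl j).1) *
  ∏ k ∈ Finset.univ.filter
      (fun k : Fin n => ∀ B ∈ π, B.min ≠ (k : WithBot (Fin n))),
    t 1 fun _ => X k

/-- The family `t` satisfies the defining recurrence of the `t`-coefficients:
`φ(X_1 ⋯ X_n) = Σ_{π ∈ NCL(n)} t_π[X_1, …, X_n]`. -/
def TRec {A : Type*} [Ring A] [Algebra ℂ A] (φ : A →ₗ[ℂ] ℂ)
    (t : ∀ m : ℕ, (Fin m → A) → ℂ) : Prop :=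
  ∀ (n : ℕ) (X : Fin (n + 1) → A),
    φ (List.ofFn X).prod =
      ∑ π ∈ Finset.univ.filter (fun π => IsNCL (n + 1) π), tTerm t (n + 1) π X

/-- The term `κ_γ[X_1, …, X_n]`: the product over blocks `B = (i_1 < … < i_l)` of `γ` of
`κ_l(X_{i_1}, …, X_{i_l})`. -/
noncomputable def cumTerm {A : Type*} [Ring A] (κ : ∀ m : ℕ, (Fin m → A) → ℂ)
    (n : ℕ) (γ : Finset (Finset (Fin n))) (X : Fin n → A) : ℂ :=
  ∏ B ∈ γ, κ B.card fun j => X (B.orderIsoOfFin rfl j).1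

/-- The family `κ` satisfies the moment–cumulant recurrence
`φ(X_1 ⋯ X_n) = Σ_{γ ∈ NC(n)} κ_γ[X_1, …, X_n]` defining the free cumulants. -/
def CumRec {A : Type*} [Ring A] [Algebra ℂ A] (φ : A →ₗ[ℂ] ℂ)
    (κ : ∀ m : ℕ, (Fin m → A) → ℂ) : Prop :=
  ∀ (n : ℕ) (X : Fin (n + 1) → A),
    φ (List.ofFn X).prod =
      ∑ γ ∈ Finset.univ.filter (fun γ => IsNC (n + 1) γ), cumTerm κ (n + 1) γ X

/-- Free independence of a family of unital subalgebras: alternating products of centered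
elements have vanishing expectation. -/
def FreeFamily {A : Type*} [Ring A] [Algebra ℂ A] (φ : A →ₗ[ℂ] ℂ) {I : Type*}
    (S : I → Subalgebra ℂ A) : Prop :=
  ∀ (n : ℕ) (a : Fin (n + 1) → A) (idx : Fin (n + 1) → I),
    (∀ k, a k ∈ S (idx k)) → (∀ k, φ (a k) = 0) →
    (∀ k : Fin n, idx k.castSucc ≠ idx k.succ) →
    φ (List.ofFn a).prod = 0

/-- Two elements are free if the unital subalgebras they generate are free. -/
def FreePair {A : Type*} [Ring A] [Algebra ℂ A] (φ : A →ₗ[ℂ] ℂ) (X Y : A) : Prop :=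
  FreeFamily φ fun b : Bool =>
    if b = true then Algebra.adjoin ℂ {X} else Algebra.adjoin ℂ {Y}

/-!
Connection is an equivalence relation, so its classes partition `Fin n`; only non-crossing
is at stake. Suppose `i < k < p < q` with `i, p` in one class and `k, q` in another. Walking
along the chain of blocks from `i` to `p` one must jump over `k`, i.e. some block `B` meeting
the class of `i` has elements `b < k < b'`; likewise some block `C` meeting the class of `k`
has elements `c < p < c'`. Since `π` is non-crossing, a class avoiding a block and having an
element between two of its elements lies entirely between them. Hence `c < b` (the class of
`p` lies between `c` and `c'`) and `b < c` (the class of `k` lies between `b` and `b'`).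
-/

open Finset

theorem isNC_of_pairwise_disjoint {n : ℕ} {γ : Finset (Finset (Fin n))}
    (hne : ∀ B ∈ γ, B.Nonempty) (hcover : ∀ x : Fin n, ∃ B ∈ γ, x ∈ B)
    (hnc : ∀ B ∈ γ, ∀ C ∈ γ, B ≠ C → ¬ Crosses B C)
    (hdisj : ∀ B ∈ γ, ∀ C ∈ γ, B ≠ C → Disjoint B C) : IsNC n γ := by
  refine ⟨⟨hne, hcover, hnc, fun B hB C hC hBC => ?_⟩, hdisj⟩
  have hBC : B ∩ C = ∅ := disjoint_iff_inter_eq_empty.1 (hdisj B hB C hC hBC)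
  exact ⟨by simp [hBC], fun j hj => absurd (hBC ▸ hj).symm (singleton_ne_empty j)⟩

section Connection

variable {n : ℕ} {π : Finset (Finset (Fin n))}

instance : Std.Symm (Linked π) :=
  ⟨fun _ _ ⟨B, hB, ha, hb⟩ => ⟨B, hB, hb, ha⟩⟩

theorem Connected.refl (a : Fin n) : Connected π a a :=
  Relation.ReflTransGen.refl

theorem Connected.symm {a b : Fin n} (h : Connected π a b) : Connected π b a :=
  Std.Symm.symm (r := Relation.ReflTransGen (Linked π)) _ _ h

theorem Connected.trans {a b c : Fin n} (hab : Connected π a b) (hbc : Connected π b c) :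
    Connected π a c :=
  Relation.ReflTransGen.trans hab hbc

theorem connected_of_mem {B : Finset (Fin n)} (hB : B ∈ π) {a b : Fin n} (ha : a ∈ B)
    (hb : b ∈ B) : Connected π a b :=
  Relation.ReflTransGen.single ⟨B, hB, ha, hb⟩

theorem exists_block_straddling {x y k : Fin n} (hxy : Connected π x y) (hxk : x < k)
    (hky : k < y) (hnxk : ¬ Connected π x k) :
    ∃ B ∈ π, ∃ b ∈ B, ∃ b' ∈ B, b < k ∧ k < b' ∧ Connected π x b := by
  suffices H : ∀ a, Connected π a y → Connected π x a → a < k →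
      ∃ B ∈ π, ∃ b ∈ B, ∃ b' ∈ B, b < k ∧ k < b' ∧ Connected π x b from
    H x hxy (.refl x) hxk
  intro a hay
  induction hay using Relation.ReflTransGen.head_induction_on with
  | refl => exact fun _ hyk => absurd hky hyk.asymm
  | @head a c hac _ ih =>
    intro hxa hak
    have hxc : Connected π x c := hxa.trans (.single hac)
    rcases lt_trichotomy c k with hck | rfl | hkc
    · exact ih hxc hck
    · exact absurd hxc hnxk
    · obtain ⟨B, hB, haB, hcB⟩ := hac
      exact ⟨B, hB, a, haB, c, hcB, hak, hkc, hxa⟩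

theorem connected_mem_Ioo_of_not_crosses
    (hnc : ∀ B ∈ π, ∀ C ∈ π, B ≠ C → ¬ Crosses B C) {C : Finset (Fin n)} (hC : C ∈ π)
    {c c' x : Fin n} (hc : c ∈ C) (hc' : c' ∈ C) (hxC : ∀ z ∈ C, ¬ Connected π x z)
    (hcx : c < x) (hxc' : x < c') {y : Fin n} (hxy : Connected π x y) : y ∈ Set.Ioo c c' := by
  induction hxy with
  | refl => exact ⟨hcx, hxc'⟩
  | @tail b y hxb hby ih =>
    have hxy : Connected π x y := hxb.trans (.single hby)
    obtain ⟨D, hD, hbD, hyD⟩ := hby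
    have hDC : D ≠ C := fun h => hxC b (h ▸ hbD) hxb
    obtain ⟨hcb, hbc'⟩ := ih
    constructor
    · refine lt_of_not_ge fun hyc => hnc D hD C hC hDC ?_
      have hyc : y < c := hyc.lt_of_ne fun h => hxC y (h ▸ hc) hxy
      exact ⟨y, c, b, c', hyc, hcb, hbc', hyD, hbD, hc, hc'⟩
    · refine lt_of_not_ge fun hc'y => hnc C hC D hD hDC.symm ?_
      have hc'y : c' < y := hc'y.lt_of_ne fun h => hxC y (h ▸ hc') hxy
      exact ⟨c, b, c', y, hcb, hbc', hc'y, hc, hc', hbD, hyD⟩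

theorem connected_of_interlaced (hnc : ∀ B ∈ π, ∀ C ∈ π, B ≠ C → ¬ Crosses B C)
    {i k p q : Fin n} (hik : i < k) (hkp : k < p) (hpq : p < q) (hip : Connected π i p)
    (hkq : Connected π k q) : Connected π i k := by
  by_contra hnik
  have hnkp : ¬ Connected π k p := fun h => hnik (hip.trans h.symm)
  obtain ⟨B, hB, b, hb, b', hb', hbk, hkb', hib⟩ := exists_block_straddling hip hik hkp hnik
  obtain ⟨C, hC, c, hc, c', hc', hcp, hpc', hkc⟩ := exists_block_straddling hkq hkp hpq hnkp
  have hkB : ∀ z ∈ B, ¬ Connected π k z := fun z hz hkz =>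
    hnik (hib.trans ((connected_of_mem hB hb hz).trans hkz.symm))
  have hpC : ∀ z ∈ C, ¬ Connected π p z := fun z hz hpz =>
    hnkp (hkc.trans ((connected_of_mem hC hc hz).trans hpz.symm))
  have hcb := connected_mem_Ioo_of_not_crosses hnc hC hc hc' hpC hcp hpc' (hip.symm.trans hib)
  have hbc := connected_mem_Ioo_of_not_crosses hnc hB hb hb' hkB hbk hkb' hkc
  exact hcb.1.asymm hbc.1

theorem mem_cPart {U : Finset (Fin n)} :
    U ∈ cPart n π ↔ ∃ u, univ.filter (Connected π u) = U := by
  simp [cPart]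

theorem filter_connected_eq_iff {u v : Fin n} :
    univ.filter (Connected π u) = univ.filter (Connected π v) ↔ Connected π u v := by
  refine ⟨fun h => ?_, fun huv => ?_⟩
  · have hv : v ∈ univ.filter (Connected π u) := h ▸ mem_filter.2 ⟨mem_univ v, .refl v⟩
    exact (mem_filter.1 hv).2
  · ext w
    simp only [mem_filter, mem_univ, true_and]
    exact ⟨huv.symm.trans, huv.trans⟩

theorem cPart_pairwise_disjoint :
    ∀ U ∈ cPart n π, ∀ V ∈ cPart n π, U ≠ V → Disjoint U V := by
  rintro _ hU _ hV hUV
  obtain ⟨u, rfl⟩ := mem_cPart.1 hU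
  obtain ⟨v, rfl⟩ := mem_cPart.1 hV
  refine disjoint_left.2 fun z hu hv => hUV (filter_connected_eq_iff.2 ?_)
  exact (mem_filter.1 hu).2.trans (mem_filter.1 hv).2.symm

theorem cPart_not_crosses (hnc : ∀ B ∈ π, ∀ C ∈ π, B ≠ C → ¬ Crosses B C) :
    ∀ U ∈ cPart n π, ∀ V ∈ cPart n π, U ≠ V → ¬ Crosses U V := by
  rintro _ hU _ hV hUV ⟨i, k, p, q, hik, hkp, hpq, hi, hp, hk, hq⟩
  obtain ⟨u, rfl⟩ := mem_cPart.1 hU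
  obtain ⟨v, rfl⟩ := mem_cPart.1 hV
  simp only [mem_filter, mem_univ, true_and] at hi hp hk hq
  have hik' := connected_of_interlaced hnc hik hkp hpq (hi.symm.trans hp) (hk.symm.trans hq)
  exact hUV (filter_connected_eq_iff.2 (hi.trans (hik'.trans hk.symm)))

end Connection

/-- For `π ∈ NCL(n)`, the connected components of `π` (classes of the connection
relation) form a non-crossing partition `c(π)` of `{1, …, n}`. -/
theorem cPart_isNC (n : ℕ) (π : Finset (Finset (Fin n))) (hπ : IsNCL n π) :
    IsNC n (cPart n π) := by
  refine isNC_of_pairwise_disjoint ?_ ?_ (cPart_not_crosses hπ.2.2.1) cPart_pairwise_disjoint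
  · intro U hU
    obtain ⟨u, rfl⟩ := mem_cPart.1 hU
    exact ⟨u, mem_filter.2 ⟨mem_univ u, .refl u⟩⟩
  · exact fun x => ⟨_, mem_cPart.2 ⟨x, rfl⟩, mem_filter.2 ⟨mem_univ x, .refl x⟩⟩
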